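/- arXiv:2406.01290 — 3 statements merged into one kernel-verified Lean document; each statement's English description precedes it below -/
import Mathlib

section
/- Let G be a finite set with |G| ≥ 2, and for each g ∈ G let H_g : [0,1] → ℝ be a strictly decreasing continuous function. Let w_g > 0 with ∑ w_g = 1 and let r ∈ (0,1). Suppose (r_g*) minimizes max_g H_g(r_g) over all (r_g) ∈ [0,1]^G with ∑ w_g r_g ≤ r, and suppose 0 < r_g* < 1 for all g. Then H_{g1}(r_{g1}*) = H_{g2}(r_{g2}*) for all g1, g2 ∈ G. -/
/-- Maximally leveling up under constrained resources: at an interior minimax-harm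
optimum, all groups experience equal harm. -/
theorem interior_minimax_optimum_equalizes_harm
    {G : Type*} [Fintype G] [Nonempty G] (hcard : 2 ≤ Fintype.card G)
    (H : G → ℝ → ℝ)
    (hdec : ∀ g, StrictAntiOn (H g) (Set.Icc (0:ℝ) 1))
    (hcont : ∀ g, ContinuousOn (H g) (Set.Icc (0:ℝ) 1))
    (w : G → ℝ) (hw : ∀ g, 0 < w g) (hsum : ∑ g, w g = 1)
    (r : ℝ) (hr : r ∈ Set.Ioo (0:ℝ) 1)
    (ρ : G → ℝ) (hρ : ∀ g, ρ g ∈ Set.Ioo (0:ℝ) 1)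
    (hbudget : ∑ g, w g * ρ g ≤ r)
    (hopt : ∀ ρ' : G → ℝ, (∀ g, ρ' g ∈ Set.Icc (0:ℝ) 1) → ∑ g, w g * ρ' g ≤ r →
      Finset.univ.sup' Finset.univ_nonempty (fun g => H g (ρ g))
        ≤ Finset.univ.sup' Finset.univ_nonempty (fun g => H g (ρ' g))) :
    ∀ g1 g2 : G, H g1 (ρ g1) = H g2 (ρ g2) := by
  classical
  set M := Finset.univ.sup' Finset.univ_nonempty (fun g => H g (ρ g)) with hM
  suffices h : ∀ g, H g (ρ g) = M by
    intro g1 g2; rw [h g1, h g2]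
  intro g1
  by_contra hne
  have hle : H g1 (ρ g1) ≤ M := Finset.le_sup' (fun g => H g (ρ g)) (Finset.mem_univ g1)
  have hlt : H g1 (ρ g1) < M := lt_of_le_of_ne hle hne
  have hmemρ : ∀ g, ρ g ∈ Set.Icc (0:ℝ) 1 := fun g => Set.mem_Icc_of_Ioo (hρ g)
  -- continuity at ρ g1
  obtain ⟨δ0, hδ0, hδprop⟩ : ∃ δ0 > 0, ∀ x ∈ Set.Icc (0:ℝ) 1,
      |x - ρ g1| < δ0 → |H g1 x - H g1 (ρ g1)| < M - H g1 (ρ g1) := by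
    have hc := (hcont g1) (ρ g1) (hmemρ g1)
    rw [Metric.continuousWithinAt_iff] at hc
    obtain ⟨δ0, h1, h2⟩ := hc (M - H g1 (ρ g1)) (by linarith)
    refine ⟨δ0, h1, fun x hx hd => ?_⟩
    have := h2 hx (by rwa [Real.dist_eq])
    rwa [Real.dist_eq] at this
  -- minimal headroom
  set m := Finset.univ.inf' Finset.univ_nonempty (fun g => 1 - ρ g) with hm
  have hmpos : 0 < m := by
    rw [hm, Finset.lt_inf'_iff]
    intro g _
    linarith [(hρ g).2]
  have hmle : ∀ g, m ≤ 1 - ρ g := fun g =>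
    Finset.inf'_le _ (Finset.mem_univ g)
  set δ := min (min (ρ g1) (δ0 / 2)) m with hδ
  have hδpos : 0 < δ := by
    apply lt_min (lt_min (hρ g1).1 (by linarith)) hmpos
  have hδρ : δ ≤ ρ g1 := le_trans (min_le_left _ _) (min_le_left _ _)
  have hδ0' : δ < δ0 := lt_of_le_of_lt (le_trans (min_le_left _ _) (min_le_right _ _)) (by linarith)
  have hδm : δ ≤ m := min_le_right _ _
  have hw1le : w g1 ≤ 1 := by
    rw [← hsum]
    exact Finset.single_le_sum (fun g _ => (hw g).le) (Finset.mem_univ g1)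
  set ρ' : G → ℝ := fun g => if g = g1 then ρ g1 - δ else ρ g + w g1 * δ with hρ'
  have hwd : 0 < w g1 * δ := mul_pos (hw g1) hδpos
  have hmem' : ∀ g, ρ' g ∈ Set.Icc (0:ℝ) 1 := by
    intro g
    by_cases hg : g = g1
    · simp only [hρ', hg, if_pos rfl]
      constructor
      · linarith
      · linarith [(hρ g1).2]
    · simp only [hρ', if_neg hg]
      constructor
      · linarith [(hρ g).1]
      · have : w g1 * δ ≤ δ := by nlinarith
        linarith [hmle g]
  -- budget
  have hsum_erase : ∑ g ∈ Finset.univ.erase g1, w g = 1 - w g1 := by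
    have := Finset.add_sum_erase Finset.univ w (Finset.mem_univ g1)
    linarith [hsum]
  have key : ∑ g, w g * ρ' g = ∑ g, w g * ρ g - w g1 * w g1 * δ := by
    rw [← Finset.add_sum_erase _ (fun g => w g * ρ' g) (Finset.mem_univ g1),
        ← Finset.add_sum_erase _ (fun g => w g * ρ g) (Finset.mem_univ g1)]
    have h1 : ρ' g1 = ρ g1 - δ := by simp [hρ']
    have h2 : ∀ g ∈ Finset.univ.erase g1,
        w g * ρ' g = w g * ρ g + w g * (w g1 * δ) := by
      intro g hg
      have : g ≠ g1 := Finset.ne_of_mem_erase hg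
      simp only [hρ', if_neg this]; ring
    rw [Finset.sum_congr rfl h2, Finset.sum_add_distrib, h1]
    have h3 : ∑ g ∈ Finset.univ.erase g1, w g * (w g1 * δ) = (1 - w g1) * (w g1 * δ) := by
      rw [← Finset.sum_mul, hsum_erase]
    rw [h3]; ring
  have hbudget' : ∑ g, w g * ρ' g ≤ r := by
    rw [key]
    nlinarith [hw g1]
  -- the new max is strictly smaller
  have hall : ∀ g, H g (ρ' g) < M := by
    intro g
    by_cases hg : g = g1
    · subst hg
      have h1 : ρ' g = ρ g - δ := by simp [hρ']
      have h2 : |ρ' g - ρ g| < δ0 := by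
        rw [h1]
        rw [abs_sub_comm]
        rw [show ρ g - (ρ g - δ) = δ by ring]
        rwa [abs_of_pos hδpos]
      have := hδprop (ρ' g) (hmem' g) h2
      have := abs_lt.mp this
      linarith [this.1, this.2]
    · have h1 : ρ' g = ρ g + w g1 * δ := by simp [hρ', hg]
      have hmem2 : ρ g + w g1 * δ ∈ Set.Icc (0:ℝ) 1 := h1 ▸ hmem' g
      have h2 : H g (ρ' g) < H g (ρ g) := by
        rw [h1]
        exact hdec g (hmemρ g) hmem2 (by linarith)
      exact lt_of_lt_of_le h2 (Finset.le_sup' (fun g => H g (ρ g)) (Finset.mem_univ g))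
  have hlt' : Finset.univ.sup' Finset.univ_nonempty (fun g => H g (ρ' g)) < M := by
    rw [Finset.sup'_lt_iff]
    intro g _
    exact hall g
  have := hopt ρ' hmem' hbudget'
  linarith
end

section
/- With notation as above (finite X, equal selection rates r for f and f', swap proportion p, base rate b > 0), the change in recall satisfies |recall(f) − recall(f')| ≤ min(r, 1 − r, g) / b, where g is the proportion of the dataset in which all label changes occur (if changes are confined to a single group of proportion g, take the g/b bound; otherwise use min(r, 1−r)/b). -/
/-- If all label changes between two equal-selection-rate classifiers are confined
to a group `B` of proportion `g`, the recall difference is at most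
`min (min r (1 - r)) g / b`. -/
theorem recall_diff_le_min_bounds_div_base_rate
    {X : Type*} [Fintype X] [Nonempty X] (y f f' : X → Bool) (B : Finset X)
    (hB : ∀ x, f x ≠ f' x → x ∈ B)
    (hcount : (Finset.univ.filter fun x => f x = true).card
            = (Finset.univ.filter fun x => f' x = true).card)
    (r g b : ℝ)
    (hr : r = ((Finset.univ.filter fun x => f x = true).card : ℝ) / (Fintype.card X))
    (hg : g = ((B.card : ℝ)) / (Fintype.card X))
    (hb : b = ((Finset.univ.filter fun x => y x = true).card : ℝ) / (Fintype.card X))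
    (hbpos : 0 < b) :
    |((Finset.univ.filter fun x => f x = true ∧ y x = true).card : ℝ)
        / ((Finset.univ.filter fun x => y x = true).card)
      - ((Finset.univ.filter fun x => f' x = true ∧ y x = true).card : ℝ)
        / ((Finset.univ.filter fun x => y x = true).card)|
      ≤ min (min r (1 - r)) g / b := by
  classical
  set n := Fintype.card X with hn
  set s := (Finset.univ.filter fun x => f x = true).card with hs
  set P := (Finset.univ.filter fun x => y x = true).card with hP
  set A := (Finset.univ.filter fun x => f x = true ∧ y x = true).card with hA
  set A' := (Finset.univ.filter fun x => f' x = true ∧ y x = true).card with hA'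
  have hnpos : 0 < n := Fintype.card_pos
  have hnR : (0:ℝ) < n := by exact_mod_cast hnpos
  have hPpos : 0 < P := by
    by_contra h
    push_neg at h
    interval_cases P
    simp at hb
    rw [hb] at hbpos
    exact lt_irrefl _ hbpos
  have hPR : (0:ℝ) < P := by exact_mod_cast hPpos
  -- nat inequalities
  have hA_le_s : A ≤ s := by
    apply Finset.card_le_card
    intro x hx; simp only [Finset.mem_filter] at *; tauto
  have hA'_le_s : A' ≤ s := by
    rw [hcount]
    apply Finset.card_le_card
    intro x hx; simp only [Finset.mem_filter] at *; tauto
  have hA_le_P : A ≤ P := by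
    apply Finset.card_le_card
    intro x hx; simp only [Finset.mem_filter] at *; tauto
  have hA'_le_P : A' ≤ P := by
    apply Finset.card_le_card
    intro x hx; simp only [Finset.mem_filter] at *; tauto
  have hinter : ∀ (h : X → Bool),
      (Finset.univ.filter fun x => h x = true) ∩ (Finset.univ.filter fun x => y x = true)
        = (Finset.univ.filter fun x => h x = true ∧ y x = true) := by
    intro h; ext x; simp [Finset.mem_filter, Finset.mem_inter]
  have h3 : s + P ≤ A + n := by
    have := Finset.card_union_add_card_inter
      (Finset.univ.filter fun x => f x = true) (Finset.univ.filter fun x => y x = true)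
    rw [hinter f] at this
    have hu := Finset.card_le_univ
      ((Finset.univ.filter fun x => f x = true) ∪ (Finset.univ.filter fun x => y x = true))
    omega
  have h3' : s + P ≤ A' + n := by
    have := Finset.card_union_add_card_inter
      (Finset.univ.filter fun x => f' x = true) (Finset.univ.filter fun x => y x = true)
    rw [hinter f'] at this
    have hu := Finset.card_le_univ
      ((Finset.univ.filter fun x => f' x = true) ∪ (Finset.univ.filter fun x => y x = true))
    omega
  have h4 : A ≤ A' + B.card := by
    have hsub : (Finset.univ.filter fun x => f x = true ∧ y x = true)
        ⊆ (Finset.univ.filter fun x => f' x = true ∧ y x = true) ∪ B := by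
      intro x hx
      simp only [Finset.mem_filter, Finset.mem_union, Finset.mem_univ, true_and] at *
      by_cases hfx : f x = f' x
      · left; exact ⟨hfx ▸ hx.1, hx.2⟩
      · right; exact hB x hfx
    calc A ≤ ((Finset.univ.filter fun x => f' x = true ∧ y x = true) ∪ B).card :=
          Finset.card_le_card hsub
      _ ≤ A' + B.card := Finset.card_union_le _ _
  have h4' : A' ≤ A + B.card := by
    have hsub : (Finset.univ.filter fun x => f' x = true ∧ y x = true)
        ⊆ (Finset.univ.filter fun x => f x = true ∧ y x = true) ∪ B := by
      intro x hx
      simp only [Finset.mem_filter, Finset.mem_union, Finset.mem_univ, true_and] at *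
      by_cases hfx : f x = f' x
      · left; exact ⟨hfx ▸ hx.1, hx.2⟩
      · right; exact hB x hfx
    calc A' ≤ ((Finset.univ.filter fun x => f x = true ∧ y x = true) ∪ B).card :=
          Finset.card_le_card hsub
      _ ≤ A + B.card := Finset.card_union_le _ _
  -- real versions
  have c1 : (A:ℝ) ≤ s := by exact_mod_cast hA_le_s
  have c2 : (A':ℝ) ≤ s := by exact_mod_cast hA'_le_s
  have c3 : (A:ℝ) ≤ P := by exact_mod_cast hA_le_P
  have c4 : (A':ℝ) ≤ P := by exact_mod_cast hA'_le_P
  have c5 : (s:ℝ) + P ≤ A + n := by exact_mod_cast h3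
  have c6 : (s:ℝ) + P ≤ A' + n := by exact_mod_cast h3'
  have c7 : (A:ℝ) ≤ A' + B.card := by exact_mod_cast h4
  have c8 : (A':ℝ) ≤ A + B.card := by exact_mod_cast h4'
  have cApos : (0:ℝ) ≤ A := Nat.cast_nonneg _
  have cA'pos : (0:ℝ) ≤ A' := Nat.cast_nonneg _
  -- rewrite RHS
  have hRHS : min (min r (1 - r)) g / b
      = min (min (s:ℝ) ((n:ℝ) - s)) (B.card : ℝ) / P := by
    rw [hr, hg, hb]
    rw [show (1:ℝ) - (s:ℝ)/n = ((n:ℝ) - s)/n by field_simp]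
    rw [min_div_div_right hnR.le, min_div_div_right hnR.le]
    field_simp
  rw [hRHS, div_sub_div_same, abs_div, abs_of_pos hPR]
  have habs : |(A:ℝ) - A'| ≤ ((s:ℝ) ⊓ ((n:ℝ) - s) ⊓ (B.card:ℝ)) := by
    rw [abs_sub_le_iff]
    constructor <;> (refine le_min (le_min ?_ ?_) ?_ <;> linarith)
  gcongr
end

section
/- Let X be finite with ground truth y, base rate b ∈ (0,1). For any two classifiers f, f' with equal selection rates and swap proportion p, the change in false positive rate satisfies |FPR(f) − FPR(f')| ≤ p / (1 − b), and the change in false negative rate satisfies |FNR(f) − FNR(f')| ≤ p / b, where FPR(g) = |{x : g x = 1 ∧ y x = 0}|/|{x : y x = 0}| and FNR(g) = |{x : g x = 0 ∧ y x = 1}|/|{x : y x = 1}|. -/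
open Finset

private lemma split_card {X : Type*} [Fintype X] (g g' : X → Bool) :
    (Finset.univ.filter fun x => g x = true ∧ g' x = true).card
      + (Finset.univ.filter fun x => g x = true ∧ g' x = false).card
      = (Finset.univ.filter fun x => g x = true).card := by
  classical
  have := Finset.card_filter_add_card_filter_not
    (s := Finset.univ.filter fun x => g x = true) (p := fun x => g' x = true)
  simpa [Finset.filter_filter, Bool.not_eq_true] using this

private lemma swap_card_eq {X : Type*} [Fintype X] (f f' : X → Bool)
    (hcount : (Finset.univ.filter fun x => f x = true).card
            = (Finset.univ.filter fun x => f' x = true).card) :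
    (Finset.univ.filter fun x => f' x = true ∧ f x = false).card
      = (Finset.univ.filter fun x => f x = true ∧ f' x = false).card := by
  have h1 := split_card f f'
  have h2 := split_card f' f
  have hcomm : (Finset.univ.filter fun x => f x = true ∧ f' x = true)
      = (Finset.univ.filter fun x => f' x = true ∧ f x = true) := by
    apply Finset.filter_congr; intro x _; constructor <;> exact fun h => ⟨h.2, h.1⟩
  rw [hcomm] at h1
  omega

private lemma card_le_swap {X : Type*} [Fintype X] (g g' : X → Bool)
    (c : X → Prop) [DecidablePred c] :
    (Finset.univ.filter fun x => g x = true ∧ c x).card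
      ≤ (Finset.univ.filter fun x => g' x = true ∧ c x).card
        + (Finset.univ.filter fun x => g x = true ∧ g' x = false).card := by
  classical
  refine le_trans (Finset.card_le_card ?_) (Finset.card_union_le _ _)
  intro x hx
  simp only [Finset.mem_filter, Finset.mem_union, Finset.mem_univ, true_and] at *
  rcases Bool.eq_false_or_eq_true (g' x) with h | h
  · exact Or.inl ⟨h, hx.2⟩
  · exact Or.inr ⟨hx.1, h⟩

/-- Swap-based bounds on error-rate metrics: the false positive rate changes by at
most `p / (1 - b)` and the false negative rate by at most `p / b`. -/
theorem fpr_fnr_diff_le_swap_proportion_bounds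
    {X : Type*} [Fintype X] [Nonempty X] (y f f' : X → Bool)
    (hcount : (Finset.univ.filter fun x => f x = true).card
            = (Finset.univ.filter fun x => f' x = true).card)
    (p b : ℝ)
    (hp : p = ((Finset.univ.filter fun x => f x = true ∧ f' x = false).card : ℝ)
            / (Fintype.card X))
    (hb : b = ((Finset.univ.filter fun x => y x = true).card : ℝ) / (Fintype.card X))
    (hbmem : b ∈ Set.Ioo (0:ℝ) 1) :
    |((Finset.univ.filter fun x => f x = true ∧ y x = false).card : ℝ)
        / ((Finset.univ.filter fun x => y x = false).card)
      - ((Finset.univ.filter fun x => f' x = true ∧ y x = false).card : ℝ)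
        / ((Finset.univ.filter fun x => y x = false).card)|
      ≤ p / (1 - b) ∧
    |((Finset.univ.filter fun x => f x = false ∧ y x = true).card : ℝ)
        / ((Finset.univ.filter fun x => y x = true).card)
      - ((Finset.univ.filter fun x => f' x = false ∧ y x = true).card : ℝ)
        / ((Finset.univ.filter fun x => y x = true).card)|
      ≤ p / b := by
  classical
  set N := Fintype.card X with hN
  set S := (Finset.univ.filter fun x => f x = true ∧ f' x = false).card with hS
  set S' := (Finset.univ.filter fun x => f' x = true ∧ f x = false).card with hS'
  have hSS : S' = S := swap_card_eq f f' hcount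
  set T := (Finset.univ.filter fun x => y x = true).card with hT
  set Fc := (Finset.univ.filter fun x => y x = false).card with hFc
  have hsum : T + Fc = N := by
    have := split_card (fun _ => true) y
    simpa [Nat.add_comm] using this
  have hNpos : 0 < N := Fintype.card_pos
  have hNR : (0:ℝ) < (N:ℝ) := by exact_mod_cast hNpos
  obtain ⟨hb0, hb1⟩ := hbmem
  have hTpos : 0 < T := by
    rcases Nat.eq_zero_or_pos T with h | h
    · rw [hb, h] at hb0; simp at hb0
    · exact h
  have hFcpos : 0 < Fc := by
    rcases Nat.eq_zero_or_pos Fc with h | h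
    · have hTN : T = N := by omega
      rw [hb, hTN, div_self hNR.ne'] at hb1
      exact absurd hb1 (lt_irrefl _)
    · exact h
  have hTR : (0:ℝ) < (T:ℝ) := by exact_mod_cast hTpos
  have hFcR : (0:ℝ) < (Fc:ℝ) := by exact_mod_cast hFcpos
  have hcast : (N:ℝ) = (T:ℝ) + (Fc:ℝ) := by exact_mod_cast hsum.symm
  have hbval : 1 - b = (Fc:ℝ) / N := by
    rw [hb]; field_simp; linarith
  have hrhs1 : p / (1 - b) = (S:ℝ) / Fc := by
    rw [hp, hbval]; field_simp
  have hrhs2 : p / b = (S:ℝ) / T := by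
    rw [hp, hb]; field_simp
  have habs : ∀ (g g' c : X → Bool),
      (Finset.univ.filter fun x => g x = true ∧ g' x = false).card = S →
      (Finset.univ.filter fun x => g' x = true ∧ g x = false).card = S →
      0 < ((Finset.univ.filter fun x => c x = true).card : ℝ) →
      |((Finset.univ.filter fun x => g x = true ∧ c x = true).card : ℝ)
          / ((Finset.univ.filter fun x => c x = true).card)
        - ((Finset.univ.filter fun x => g' x = true ∧ c x = true).card : ℝ)
          / ((Finset.univ.filter fun x => c x = true).card)|
        ≤ (S:ℝ) / ((Finset.univ.filter fun x => c x = true).card) := by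
    intro g g' c hg hg' hc
    rw [div_sub_div_same, abs_div, abs_of_nonneg hc.le]
    gcongr
    rw [abs_sub_le_iff]
    have h1 := card_le_swap g g' (fun x => c x = true)
    have h2 := card_le_swap g' g (fun x => c x = true)
    rw [hg] at h1
    rw [hg'] at h2
    constructor
    · have : ((Finset.univ.filter fun x => g x = true ∧ c x = true).card : ℝ)
          ≤ ((Finset.univ.filter fun x => g' x = true ∧ c x = true).card : ℝ) + S := by
        exact_mod_cast h1
      linarith
    · have : ((Finset.univ.filter fun x => g' x = true ∧ c x = true).card : ℝ)
          ≤ ((Finset.univ.filter fun x => g x = true ∧ c x = true).card : ℝ) + S := by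
        exact_mod_cast h2
      linarith
  constructor
  · rw [hrhs1]
    have h1 : (Finset.univ.filter fun x => f x = true ∧ f' x = false).card = S := hS.symm
    have h2 : (Finset.univ.filter fun x => f' x = true ∧ f x = false).card = S := by
      rw [← hS']; exact hSS
    have := habs f f' (fun x => !(y x)) h1 h2 (by
      simpa [Bool.not_eq_true', ← hFc] using hFcR)
    simpa [Bool.not_eq_true', ← hFc] using this
  · rw [hrhs2]
    have e1 : (Finset.univ.filter fun x => (!(f x)) = true ∧ (!(f' x)) = false)
        = (Finset.univ.filter fun x => f' x = true ∧ f x = false) := by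
      apply Finset.filter_congr; intro x _
      simp only [Bool.not_eq_true', Bool.not_eq_false']
      exact and_comm
    have e2 : (Finset.univ.filter fun x => (!(f' x)) = true ∧ (!(f x)) = false)
        = (Finset.univ.filter fun x => f x = true ∧ f' x = false) := by
      apply Finset.filter_congr; intro x _
      simp only [Bool.not_eq_true', Bool.not_eq_false']
      exact and_comm
    have h1 : (Finset.univ.filter fun x => (!(f x)) = true ∧ (!(f' x)) = false).card = S := by
      rw [e1, ← hS']; exact hSS
    have h2 : (Finset.univ.filter fun x => (!(f' x)) = true ∧ (!(f x)) = false).card = S := by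
      rw [e2]
    have := habs (fun x => !(f x)) (fun x => !(f' x)) y h1 h2 (by
      simpa [← hT] using hTR)
    simpa [Bool.not_eq_true', ← hT] using this
end
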